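/- Let n ≥ 2 and k a field. Equip the polynomial ring S = k[x_1, y_1, z_1, …, x_n, y_n, z_n] with the graded lexicographic monomial order induced by the variable ordering x_1 < y_1 < z_1 < x_2 < ⋯ < x_n < y_n < z_n. Then for every nonzero polynomial f in the toric ideal I_{𝒢_n}, there exist indices 1 ≤ i < j ≤ n such that the monomial x_i y_i z_j divides the leading monomial of f. (Equivalently, the initial ideal of I_{𝒢_n} with respect to this order is generated by the squarefree monomials x_i y_i z_j, 1 ≤ i < j ≤ n, so the binomials x_i y_i z_j − z_i x_j y_j form a Gröbner basis of I_{𝒢_n}.) -/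
import Mathlib


open MvPolynomial

/-- Edges of the graph `𝒢ₙ`: `(i,0) = xᵢ`, `(i,1) = yᵢ`, `(i,2) = zᵢ`. -/
abbrev EdgeVar (n : ℕ) := Fin n × Fin 3

/-- Vertices of the graph `𝒢ₙ`: `none = w`, `some (i,0) = uᵢ⁽¹⁾`, `some (i,1) = uᵢ⁽²⁾`. -/
abbrev VertexVar (n : ℕ) := Option (Fin n × Fin 2)

/-- The `k`-algebra homomorphism sending each edge variable to the product of the
vertex variables of its endpoints. -/
noncomputable def piMap (n : ℕ) (k : Type*) [CommRing k] :
    MvPolynomial (EdgeVar n) k →ₐ[k] MvPolynomial (VertexVar n) k :=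
  aeval (fun e : EdgeVar n =>
    if e.2 = 0 then X none * X (some (e.1, 0))
    else if e.2 = 1 then X none * X (some (e.1, 1))
    else X (some (e.1, 0)) * X (some (e.1, 1)))

/-- Position of a variable in the ordering `x₁ < y₁ < z₁ < x₂ < ⋯ < xₙ < yₙ < zₙ`. -/
def varIdx {n : ℕ} (v : EdgeVar n) : ℕ := 3 * (v.1 : ℕ) + (v.2 : ℕ)

/-- Graded lexicographic order on exponent vectors, induced by the variable ordering
`x₁ < y₁ < z₁ < x₂ < ⋯ < xₙ < yₙ < zₙ`: first compare total degrees, then compare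
lexicographically from the largest (most significant) variable. -/
def grlexLt {n : ℕ} (a b : EdgeVar n →₀ ℕ) : Prop :=
  (a.sum fun _ e => e) < (b.sum fun _ e => e) ∨
    ((a.sum fun _ e => e) = (b.sum fun _ e => e) ∧
      ∃ v : EdgeVar n, a v < b v ∧ ∀ u : EdgeVar n, varIdx v < varIdx u → a u = b u)

noncomputable def vmap {n : ℕ} (e : EdgeVar n) : VertexVar n →₀ ℕ :=
  if e.2 = 0 then Finsupp.single none 1 + Finsupp.single (some (e.1, 0)) 1
  else if e.2 = 1 then Finsupp.single none 1 + Finsupp.single (some (e.1, 1)) 1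
  else Finsupp.single (some (e.1, 0)) 1 + Finsupp.single (some (e.1, 1)) 1

noncomputable def emap {n : ℕ} (m : EdgeVar n →₀ ℕ) : VertexVar n →₀ ℕ :=
  m.sum fun e c => c • vmap e

lemma gen_eq {n : ℕ} {k : Type*} [CommRing k] (e : EdgeVar n) :
    (if e.2 = 0 then (X none * X (some (e.1, 0)) : MvPolynomial (VertexVar n) k)
    else if e.2 = 1 then X none * X (some (e.1, 1))
    else X (some (e.1, 0)) * X (some (e.1, 1))) = monomial (vmap e) 1 := by
  unfold vmap
  split_ifs <;> rw [X, X, monomial_mul, one_mul]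

lemma prod_monomial_one {σ ι : Type*} {R : Type*} [CommRing R] (s : Finset ι)
    (f : ι → (σ →₀ ℕ)) :
    (∏ i ∈ s, (monomial (f i) (1 : R))) = monomial (∑ i ∈ s, f i) 1 := by
  induction s using Finset.cons_induction with
  | empty => simp [monomial_zero']
  | cons a s ha ih => rw [Finset.prod_cons, Finset.sum_cons, ih, monomial_mul, one_mul]

lemma piMap_monomial {n : ℕ} {k : Type*} [CommRing k] (m : EdgeVar n →₀ ℕ) (c : k) :
    piMap n k (monomial m c) = monomial (emap m) c := by
  rw [piMap, aeval_monomial]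
  have : (m.prod fun e c' => (if e.2 = 0 then (X none * X (some (e.1, 0)) : MvPolynomial (VertexVar n) k)
      else if e.2 = 1 then X none * X (some (e.1, 1))
      else X (some (e.1, 0)) * X (some (e.1, 1))) ^ c') = monomial (emap m) 1 := by
    rw [Finsupp.prod, emap, Finsupp.sum]
    rw [← prod_monomial_one]
    refine Finset.prod_congr rfl fun e _ => ?_
    rw [gen_eq, monomial_pow, one_pow]
  rw [this, algebraMap_eq, C_mul_monomial, mul_one]

lemma emap_apply {n : ℕ} (a : EdgeVar n →₀ ℕ) (v : VertexVar n) :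
    emap a v = ∑ e : EdgeVar n, a e * vmap e v := by
  rw [emap, Finsupp.sum_apply]
  rw [Finsupp.sum_fintype]
  · simp [Finsupp.smul_apply]
  · intro e; simp

lemma emap_apply0 {n : ℕ} (a : EdgeVar n →₀ ℕ) (i : Fin n) :
    emap a (some (i, 0)) = a (i, 0) + a (i, 2) := by
  rw [emap_apply, Fintype.sum_prod_type]
  have h : ∀ i' : Fin n, (∑ t : Fin 3, a (i', t) * vmap (i', t) (some (i, 0)))
      = if i' = i then a (i', 0) + a (i', 2) else 0 := by
    intro i'
    rw [Fin.sum_univ_three]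
    simp only [vmap, Finsupp.add_apply, Finsupp.single_apply]
    by_cases h : i' = i <;> simp [h]
  simp only [h]
  simp

lemma emap_apply1 {n : ℕ} (a : EdgeVar n →₀ ℕ) (i : Fin n) :
    emap a (some (i, 1)) = a (i, 1) + a (i, 2) := by
  rw [emap_apply, Fintype.sum_prod_type]
  have h : ∀ i' : Fin n, (∑ t : Fin 3, a (i', t) * vmap (i', t) (some (i, 1)))
      = if i' = i then a (i', 1) + a (i', 2) else 0 := by
    intro i'
    rw [Fin.sum_univ_three]
    simp only [vmap, Finsupp.add_apply, Finsupp.single_apply]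
    by_cases h : i' = i <;> simp [h]
  simp only [h]
  simp

lemma emap_deg {n : ℕ} (a : EdgeVar n →₀ ℕ) :
    ((emap a).sum fun _ e => e) = 2 * a.sum fun _ e => e := by
  rw [emap, Finsupp.sum_sum_index (fun _ => rfl) (fun _ _ _ => rfl)]
  rw [Finsupp.mul_sum]
  refine Finsupp.sum_congr fun e _ => ?_
  rw [Finsupp.sum_smul_index (fun _ => rfl), ← Finsupp.mul_sum]
  have : ((vmap e).sum fun _ c => c) = 2 := by
    unfold vmap
    split_ifs <;>
      rw [Finsupp.sum_add_index (fun _ _ => rfl) (fun _ _ _ _ => rfl),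
        Finsupp.sum_single_index rfl, Finsupp.sum_single_index rfl]
  rw [this, mul_comm]

lemma deg_eq {n : ℕ} (a : EdgeVar n →₀ ℕ) :
    (a.sum fun _ e => e) = ∑ i : Fin n, (a (i, 0) + a (i, 1) + a (i, 2)) := by
  rw [Finsupp.sum_fintype _ _ (fun _ => rfl), Fintype.sum_prod_type]
  exact Finset.sum_congr rfl fun i _ => by rw [Fin.sum_univ_three]

lemma exists_partner {n : ℕ} {k : Type*} [Field k] (f : MvPolynomial (EdgeVar n) k)
    (hf : piMap n k f = 0) (L : EdgeVar n →₀ ℕ) (hL : L ∈ f.support) :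
    ∃ m ∈ f.support, m ≠ L ∧ emap m = emap L := by
  have h0 : (piMap n k f).coeff (emap L) = 0 := by rw [hf]; simp
  conv_lhs at h0 => rw [f.as_sum]
  rw [map_sum] at h0
  simp_rw [piMap_monomial] at h0
  rw [MvPolynomial.coeff_sum] at h0
  simp_rw [coeff_monomial] at h0
  rw [← Finset.sum_erase_add _ _ hL, if_pos rfl] at h0
  have hc : MvPolynomial.coeff L f ≠ 0 := MvPolynomial.mem_support_iff.mp hL
  have hs : (∑ m ∈ f.support.erase L, if emap m = emap L then MvPolynomial.coeff m f else 0) ≠ 0 := by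
    intro h; rw [h, zero_add] at h0; exact hc h0
  obtain ⟨m, hm, hmne⟩ := Finset.exists_ne_zero_of_sum_ne_zero hs
  refine ⟨m, Finset.mem_of_mem_erase hm, Finset.ne_of_mem_erase hm, ?_⟩
  by_contra hem
  rw [if_neg hem] at hmne
  exact hmne rfl

lemma key {n : ℕ} (m L : EdgeVar n →₀ ℕ) (hne : m ≠ L)
    (h1 : ∀ i : Fin n, m (i, 0) + m (i, 2) = L (i, 0) + L (i, 2))
    (h2 : ∀ i : Fin n, m (i, 1) + m (i, 2) = L (i, 1) + L (i, 2))
    (hdeg : (m.sum fun _ e => e) = (L.sum fun _ e => e))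
    (hlt : grlexLt m L) :
    ∃ i j : Fin n, i < j ∧ 1 ≤ L (i, 0) ∧ 1 ≤ L (i, 1) ∧ 1 ≤ L (j, 2) := by
  -- sums of the relations
  have hs1 : (∑ i : Fin n, m (i, 0)) + (∑ i : Fin n, m (i, 2))
      = (∑ i : Fin n, L (i, 0)) + (∑ i : Fin n, L (i, 2)) := by
    rw [← Finset.sum_add_distrib, ← Finset.sum_add_distrib]
    exact Finset.sum_congr rfl fun i _ => h1 i
  have hs2 : (∑ i : Fin n, m (i, 1)) + (∑ i : Fin n, m (i, 2))
      = (∑ i : Fin n, L (i, 1)) + (∑ i : Fin n, L (i, 2)) := by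
    rw [← Finset.sum_add_distrib, ← Finset.sum_add_distrib]
    exact Finset.sum_congr rfl fun i _ => h2 i
  have hdm : (m.sum fun _ e => e)
      = (∑ i : Fin n, m (i, 0)) + (∑ i : Fin n, m (i, 1)) + (∑ i : Fin n, m (i, 2)) := by
    rw [deg_eq, Finset.sum_add_distrib, Finset.sum_add_distrib]
  have hdL : (L.sum fun _ e => e)
      = (∑ i : Fin n, L (i, 0)) + (∑ i : Fin n, L (i, 1)) + (∑ i : Fin n, L (i, 2)) := by
    rw [deg_eq, Finset.sum_add_distrib, Finset.sum_add_distrib]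
  rw [hdm, hdL] at hdeg
  have hz : (∑ i : Fin n, m (i, 2)) = ∑ i : Fin n, L (i, 2) := by omega
  -- the set of indices where the z-exponents differ
  set T : Finset (Fin n) := Finset.univ.filter fun i => m (i, 2) ≠ L (i, 2) with hT
  have hTne : T.Nonempty := by
    by_contra h
    rw [Finset.not_nonempty_iff_eq_empty] at h
    apply hne
    have hall : ∀ i : Fin n, m (i, 2) = L (i, 2) := by
      intro i
      by_contra hi
      have : i ∈ T := by rw [hT]; simp [hi]
      simp [h] at this
    ext v
    obtain ⟨i, t⟩ := v
    fin_cases t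
    · show m (i, 0) = L (i, 0); have := h1 i; have := hall i; omega
    · show m (i, 1) = L (i, 1); have := h2 i; have := hall i; omega
    · show m (i, 2) = L (i, 2); exact hall i
  set j : Fin n := T.max' hTne with hj
  have hjT : j ∈ T := T.max'_mem hTne
  have hjz : m (j, 2) ≠ L (j, 2) := by
    rw [hT] at hjT; simpa using hjT
  have hgt : ∀ i : Fin n, j < i → m (i, 2) = L (i, 2) := by
    intro i hi
    by_contra hiz
    have : i ∈ T := by rw [hT]; simp [hiz]
    exact absurd (T.le_max' i this) (not_le.mpr hi)
  -- extract the lex witness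
  rcases hlt with hlt | ⟨_, v, hv, hvmax⟩
  · omega
  -- show v = (j, 2)
  have hvj : v = ((j, 2) : EdgeVar n) := by
    have hv2 : (v.2 : ℕ) < 3 := v.2.isLt
    rcases lt_trichotomy (varIdx v) (varIdx ((j, 2) : EdgeVar n)) with h | h | h
    · exact absurd (hvmax _ h) hjz
    · unfold varIdx at h
      simp only at h
      have hfst : (v.1 : ℕ) = (j : ℕ) := by omega
      have hsnd : (v.2 : ℕ) = 2 := by omega
      obtain ⟨a, b⟩ := v
      simp only [Prod.mk.injEq]
      exact ⟨Fin.ext hfst, Fin.ext hsnd⟩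
    · exfalso
      have hfst : (j : ℕ) < (v.1 : ℕ) := by unfold varIdx at h; simp only at h; omega
      have hjlt : j < v.1 := hfst
      have hz2 := hgt v.1 hjlt
      have hm0 : m (v.1, 0) = L (v.1, 0) := by have := h1 v.1; omega
      have hm1 : m (v.1, 1) = L (v.1, 1) := by have := h2 v.1; omega
      obtain ⟨a, b⟩ := v
      fin_cases b
      · exact absurd hm0 (ne_of_lt hv)
      · exact absurd hm1 (ne_of_lt hv)
      · exact absurd hz2 (ne_of_lt hv)
  subst hvj
  -- so m (j,2) < L (j,2); find i < j with L (i,2) < m (i,2)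
  have hexi : ∃ i : Fin n, i < j ∧ L (i, 2) < m (i, 2) := by
    by_contra h
    push_neg at h
    have hle : ∀ i ∈ Finset.univ, L (i, 2) ≤ m (i, 2) → True := fun _ _ _ => trivial
    have : (∑ i : Fin n, m (i, 2)) < ∑ i : Fin n, L (i, 2) := by
      apply Finset.sum_lt_sum (fun i _ => ?_) ⟨j, Finset.mem_univ j, hv⟩
      rcases lt_trichotomy i j with hij | hij | hij
      · exact h i hij
      · subst hij; exact le_of_lt hv
      · exact le_of_eq (hgt i hij)
    omega
  obtain ⟨i, hij, hiz⟩ := hexi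
  refine ⟨i, j, hij, ?_, ?_, ?_⟩
  · show 1 ≤ L (i, 0); have := h1 i; omega
  · show 1 ≤ L (i, 1); have := h2 i; omega
  · show 1 ≤ L (j, 2); omega

/-- For every nonzero `f` in the toric ideal `I_{𝒢ₙ}`, the leading monomial of `f`
with respect to the graded lex order is divisible by some `xᵢ yᵢ z_j` with `i < j`;
i.e. the initial ideal is generated by the squarefree monomials `xᵢ yᵢ z_j`, `i < j`,
and the binomials `xᵢ yᵢ z_j − zᵢ x_j y_j` form a Gröbner basis of `I_{𝒢ₙ}`. -/
theorem stmt_1 (n : ℕ) (hn : 2 ≤ n) (k : Type*) [Field k]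
    (f : MvPolynomial (EdgeVar n) k)
    (hf : f ∈ RingHom.ker (piMap n k).toRingHom) (hf0 : f ≠ 0)
    (L : EdgeVar n →₀ ℕ) (hL : L ∈ f.support)
    (hmax : ∀ m ∈ f.support, m ≠ L → grlexLt m L) :
    ∃ i j : Fin n, i < j ∧
      Finsupp.single ((i, 0) : EdgeVar n) 1 + Finsupp.single ((i, 1) : EdgeVar n) 1
        + Finsupp.single ((j, 2) : EdgeVar n) 1 ≤ L := by
  have hker : piMap n k f = 0 := hf
  obtain ⟨m, hm, hmne, hem⟩ := exists_partner f hker L hL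
  have h1 : ∀ i : Fin n, m (i, 0) + m (i, 2) = L (i, 0) + L (i, 2) := fun i => by
    have := DFunLike.congr_fun hem (some (i, 0))
    rwa [emap_apply0, emap_apply0] at this
  have h2 : ∀ i : Fin n, m (i, 1) + m (i, 2) = L (i, 1) + L (i, 2) := fun i => by
    have := DFunLike.congr_fun hem (some (i, 1))
    rwa [emap_apply1, emap_apply1] at this
  have hdeg : (m.sum fun _ e => e) = (L.sum fun _ e => e) := by
    have hdm := emap_deg m
    have hdL := emap_deg L
    rw [hem] at hdm
    omega
  obtain ⟨i, j, hij, ha, hb, hc⟩ := key m L hmne h1 h2 hdeg (hmax m hm hmne)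
  have hijne : i ≠ j := ne_of_lt hij
  refine ⟨i, j, hij, Finsupp.le_def.mpr fun s => ?_⟩
  simp only [Finsupp.coe_add, Pi.add_apply, Finsupp.single_apply]
  rcases eq_or_ne (((i, 0)) : EdgeVar n) s with rfl | s0
  · rw [if_pos rfl, if_neg (by simp), if_neg (by simp [hijne])]
    omega
  rcases eq_or_ne (((i, 1)) : EdgeVar n) s with rfl | s1
  · rw [if_neg (by simp), if_pos rfl, if_neg (by simp [hijne])]
    omega
  rcases eq_or_ne (((j, 2)) : EdgeVar n) s with rfl | s2
  · rw [if_neg s0, if_neg s1, if_pos rfl]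
    omega
  · rw [if_neg s0, if_neg s1, if_neg s2]
    omega
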